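/- (Hypergeometric tail bound, Chvátal) Let X follow the hypergeometric distribution counting marked items when drawing m items without replacement from a population of L items of which K are marked, and let mu = m*K/L. Then for any t >= 0, P(X >= mu + t*m) <= exp(-2*t^2*m), and symmetrically P(X <= mu - t*m) <= exp(-2*t^2*m). -/

import Mathlib

/-!
Chernoff's method with exponent `θ = 4t`. Writing `(1 + x) ^ #(S ∩ M)` as
`∑ j, C(#(S ∩ M), j) x ^ j` and counting pairs `T ⊆ S ∩ M` with `#T = j` gives
`∑_S C(#(S ∩ M), j) = C(K, j) C(L - j, m - j) ≤ C(L, m) C(m, j) p ^ j` with `p = K / L`,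
so the exponential moments of the hypergeometric count are dominated by those of a
`Binomial(m, p)` variable, and `1 - p + p e^θ ≤ exp (θ p + θ² / 8)` is Hoeffding's lemma.
The lower tail is the upper tail for the complement of `M`.
-/

open Finset Real MeasureTheory ProbabilityTheory

lemma one_sub_add_mul_exp_le {p : ℝ} (hp0 : 0 ≤ p) (hp1 : p ≤ 1) (s : ℝ) :
    1 - p + p * exp s ≤ exp (s * p + s ^ 2 / 8) := by
  let q : unitInterval := ⟨p, hp0, hp1⟩
  let X : Bool → ℝ := fun b => if b then 1 else 0
  have hX : ∀ᵐ b ∂Ber(true, false, q), X b ∈ Set.Icc (0 : ℝ) 1 :=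
    ae_of_all _ fun b => by cases b <;> simp [X]
  have hmgf := (hasSubgaussianMGF_of_mem_Icc (measurable_of_finite X).aemeasurable hX).mgf_le s
  have hmean : Ber(true, false, q)[X] = p := by simp [integral_bernoulliMeasure, X, q]
  simp only [mgf, integral_bernoulliMeasure, hmean, X, q] at hmgf
  norm_num at hmgf
  calc 1 - p + p * exp s
      = exp (s * p) * (p * exp (s * (1 - p)) + (1 - p) * exp (-(s * p))) := by
        rw [mul_add, mul_left_comm, ← exp_add, mul_left_comm, ← exp_add]
        ring_nf
        rw [exp_zero]
        ring
    _ ≤ exp (s * p) * exp (1 / 4 * s ^ 2 / 2) := by gcongr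
    _ = exp (s * p + s ^ 2 / 8) := by rw [← exp_add]; ring_nf

theorem card_filter_le_sum_exp {ι : Type*} (s : Finset ι) (f : ι → ℝ) (c : ℝ) {θ : ℝ}
    (hθ : 0 ≤ θ) : (#{i ∈ s | c ≤ f i} : ℝ) ≤ ∑ i ∈ s, exp (θ * (f i - c)) := by
  rw [card_filter, Nat.cast_sum]
  refine sum_le_sum fun i _ => ?_
  split_ifs with h
  · exact_mod_cast one_le_exp (mul_nonneg hθ (sub_nonneg.2 h))
  · simpa using (exp_pos _).le

lemma Nat.descFactorial_mul_pow_le {k n : ℕ} (h : k ≤ n) (j : ℕ) :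
    k.descFactorial j * n ^ j ≤ n.descFactorial j * k ^ j := by
  simp only [Nat.descFactorial_eq_prod_range, Finset.pow_eq_prod_const, ← prod_mul_distrib]
  refine prod_le_prod (fun _ _ => Nat.zero_le _) fun i _ => ?_
  rw [Nat.sub_mul, Nat.sub_mul, mul_comm k n]
  exact Nat.sub_le_sub_left (Nat.mul_le_mul_left i h) _

lemma Nat.choose_mul_pow_le {k n : ℕ} (h : k ≤ n) (j : ℕ) :
    k.choose j * n ^ j ≤ n.choose j * k ^ j := by
  have := Nat.descFactorial_mul_pow_le h j
  simp only [Nat.descFactorial_eq_factorial_mul_choose, mul_assoc] at this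
  exact Nat.le_of_mul_le_mul_left this j.factorial_pos

lemma Nat.cast_choose_le_choose_mul_div_pow {k n : ℕ} (h : k ≤ n) (j : ℕ) :
    (k.choose j : ℝ) ≤ n.choose j * ((k : ℝ) / n) ^ j := by
  rcases n.eq_zero_or_pos with rfl | hn
  · obtain rfl := Nat.le_zero.1 h
    rcases j with _ | j <;> simp
  rw [div_pow, ← mul_div_assoc, le_div_iff₀ (by positivity)]
  exact_mod_cast Nat.choose_mul_pow_le h j

theorem one_add_pow_eq_sum_range_choose {R : Type*} [CommSemiring R] {k n : ℕ} (h : k ≤ n)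
    (x : R) : (1 + x) ^ k = ∑ j ∈ range (n + 1), (k.choose j : R) * x ^ j := by
  rw [add_comm, add_pow]
  refine (sum_subset (range_subset_range.2 (by omega)) fun j _ hj => ?_).trans
    (sum_congr rfl fun j _ => by ring)
  rw [Nat.choose_eq_zero_of_lt (by simpa using hj)]
  simp

section Hypergeometric

variable {α : Type*} [Fintype α]

theorem ncard_setOf_card_eq_and (m : ℕ) (P : Finset α → Prop) [DecidablePred P] :
    {S : Finset α | #S = m ∧ P S}.ncard = #{S ∈ univ.powersetCard m | P S} := by
  rw [← Set.ncard_coe_finset]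
  congr
  ext S
  simp

variable [DecidableEq α]

theorem sum_powersetCard_choose_card_inter (M : Finset α) {j m : ℕ} (hjm : j ≤ m) :
    ∑ S ∈ univ.powersetCard m, (#(S ∩ M)).choose j
      = (#M).choose j * (Fintype.card α - j).choose (m - j) := by
  have hcount : ∀ S : Finset α, (#(S ∩ M)).choose j = #{T ∈ M.powersetCard j | T ⊆ S} := by
    intro S
    rw [← card_powersetCard, inter_comm]
    congr 1
    ext T
    simp [subset_inter_iff, and_comm, and_assoc]
  simp_rw [hcount, card_filter]
  rw [sum_comm, ← smul_eq_mul, ← card_powersetCard, ← sum_const]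
  refine sum_congr rfl fun T hT => ?_
  rw [← card_filter]
  have hT := mem_powersetCard.1 hT
  rw [← hT.2, card_filter_powersetCard_subset T univ m (subset_univ T) (hT.2 ▸ hjm), card_univ]

theorem sum_powersetCard_one_add_pow_card_inter_le (M : Finset α) (m : ℕ) {x : ℝ}
    (hx : 0 ≤ x) :
    ∑ S ∈ univ.powersetCard m, (1 + x) ^ #(S ∩ M)
      ≤ (Fintype.card α).choose m * (1 + #M / Fintype.card α * x) ^ m := by
  set L := Fintype.card α
  calc ∑ S ∈ univ.powersetCard m, (1 + x) ^ #(S ∩ M)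
      = ∑ j ∈ range (m + 1),
          ((∑ S ∈ univ.powersetCard m, (#(S ∩ M)).choose j : ℕ) : ℝ) * x ^ j := by
        simp_rw [Nat.cast_sum, sum_mul]
        rw [sum_comm]
        refine sum_congr rfl fun S hS => one_add_pow_eq_sum_range_choose ?_ x
        exact (card_le_card inter_subset_left).trans (mem_powersetCard.1 hS).2.le
    _ = ∑ j ∈ range (m + 1), ((#M).choose j : ℝ) * (L - j).choose (m - j) * x ^ j := by
        refine sum_congr rfl fun j hj => ?_
        rw [sum_powersetCard_choose_card_inter M (Nat.lt_succ_iff.1 (mem_range.1 hj))]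
        push_cast
        rfl
    _ ≤ ∑ j ∈ range (m + 1), L.choose j * (#M / L : ℝ) ^ j * (L - j).choose (m - j) * x ^ j := by
        gcongr with j
        exact Nat.cast_choose_le_choose_mul_div_pow (card_le_univ M) j
    _ = L.choose m * (1 + #M / L * x) ^ m := by
        rw [one_add_pow_eq_sum_range_choose le_rfl, mul_sum]
        refine sum_congr rfl fun j hj => ?_
        have := Nat.choose_mul (n := L) (Nat.lt_succ_iff.1 (mem_range.1 hj))
        rw [mul_pow, ← mul_assoc, ← mul_assoc, ← Nat.cast_mul, this, Nat.cast_mul]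
        ring

theorem card_upper_tail_le (M : Finset α) (m : ℕ) {t : ℝ} (ht : 0 ≤ t) :
    (#{S ∈ univ.powersetCard m | (m : ℝ) * #M / Fintype.card α + t * m ≤ #(S ∩ M)} : ℝ)
      ≤ (Fintype.card α).choose m * exp (-2 * t ^ 2 * m) := by
  set p : ℝ := #M / Fintype.card α
  have hp0 : 0 ≤ p := by positivity
  have hp1 : p ≤ 1 := div_le_one_of_le₀ (by exact_mod_cast card_le_univ M) (by positivity)
  have hθ : 0 ≤ 4 * t := by positivity
  set x := exp (4 * t) - 1
  have hx : 0 ≤ x := sub_nonneg.2 (one_le_exp hθ)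
  have hexp : ∀ k : ℕ, exp (4 * t * k) = (1 + x) ^ k := fun k => by
    rw [add_sub_cancel, ← exp_nat_mul, mul_comm]
  calc (#{S ∈ univ.powersetCard m | (m : ℝ) * #M / Fintype.card α + t * m ≤ #(S ∩ M)} : ℝ)
      ≤ ∑ S ∈ univ.powersetCard m,
          exp (4 * t * (#(S ∩ M) - (m * #M / Fintype.card α + t * m))) :=
        card_filter_le_sum_exp _ _ _ hθ
    _ = (∑ S ∈ univ.powersetCard m, (1 + x) ^ #(S ∩ M)) * exp (-(4 * t * (p * m + t * m))) := by
        rw [sum_mul]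
        refine sum_congr rfl fun S _ => ?_
        rw [← hexp, ← exp_add]
        congr 1
        simp only [p]
        ring
    _ ≤ (Fintype.card α).choose m * (1 + p * x) ^ m * exp (-(4 * t * (p * m + t * m))) := by
        gcongr
        exact sum_powersetCard_one_add_pow_card_inter_le M m hx
    _ ≤ (Fintype.card α).choose m * exp (4 * t * p + (4 * t) ^ 2 / 8) ^ m
          * exp (-(4 * t * (p * m + t * m))) := by
        gcongr
        refine le_of_eq_of_le ?_ (one_sub_add_mul_exp_le hp0 hp1 (4 * t))
        simp only [x]
        ring
    _ = (Fintype.card α).choose m * exp (-2 * t ^ 2 * m) := by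
        rw [mul_assoc, ← exp_nat_mul, ← exp_add]
        ring_nf

theorem card_lower_tail_le (M : Finset α) (m : ℕ) {t : ℝ} (ht : 0 ≤ t) :
    (#{S ∈ univ.powersetCard m | (#(S ∩ M) : ℝ) ≤ m * #M / Fintype.card α - t * m} : ℝ)
      ≤ (Fintype.card α).choose m * exp (-2 * t ^ 2 * m) := by
  refine le_trans ?_ (card_upper_tail_le Mᶜ m ht)
  refine Nat.cast_le.2 (card_le_card (monotone_filter_right _ fun S hS => ?_))
  rw [mem_powersetCard] at hS
  have hm : (m : ℝ) ≤ Fintype.card α := by exact_mod_cast hS.2 ▸ card_le_univ S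
  have hsplit : (#(S ∩ Mᶜ) : ℝ) = m - #(S ∩ M) := by
    rw [← hS.2, ← sdiff_eq_inter_compl, ← card_inter_add_card_sdiff S M]
    push_cast
    ring
  have hmean : (m : ℝ) * #Mᶜ / Fintype.card α = m - m * #M / Fintype.card α := by
    rw [card_compl, Nat.cast_sub (card_le_univ M)]
    rcases (Nat.cast_nonneg (α := ℝ) (Fintype.card α)).eq_or_lt with h | h
    · rw [← h] at hm ⊢
      simp [le_antisymm hm (Nat.cast_nonneg m)]
    · field_simp
  rw [hsplit, hmean]
  intro h
  linarith

end Hypergeometric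

theorem hypergeometric_tail_bound_general
    (L K m : ℕ)
    (M : Finset (Fin L)) (hM : M.card = K) (t : ℝ) (ht : 0 ≤ t) :
    (({S : Finset (Fin L) | S.card = m ∧
          ((m : ℝ) * K / L + t * m ≤ ((S ∩ M).card : ℝ))}.ncard : ℝ) / (L.choose m)
        ≤ Real.exp (-2 * t ^ 2 * m)) ∧
    (({S : Finset (Fin L) | S.card = m ∧
          (((S ∩ M).card : ℝ) ≤ (m : ℝ) * K / L - t * m)}.ncard : ℝ) / (L.choose m)
        ≤ Real.exp (-2 * t ^ 2 * m)) := by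
  subst hM
  have hupper := card_upper_tail_le M m ht
  have hlower := card_lower_tail_le M m ht
  simp only [Fintype.card_fin] at hupper hlower
  rw [ncard_setOf_card_eq_and, ncard_setOf_card_eq_and]
  exact ⟨div_le_of_le_mul₀ (Nat.cast_nonneg _) (exp_pos _).le (by linarith),
    div_le_of_le_mul₀ (Nat.cast_nonneg _) (exp_pos _).le (by linarith)⟩

/-- Chvátal's tail bound for the hypergeometric distribution.
Drawing `m` items uniformly without replacement from a population of `L` items
of which `K` are marked (`M` is the marked set), with `μ = mK/L`, the
probability that the number of marked items drawn is at least `μ + tm` is at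
most `exp(-2t²m)`, and symmetrically for the lower tail. -/
theorem hypergeometric_tail_bound
    (L K m : ℕ) (hK : K ≤ L) (hm : m ≤ L)
    (M : Finset (Fin L)) (hM : M.card = K) (t : ℝ) (ht : 0 ≤ t) :
    (({S : Finset (Fin L) | S.card = m ∧
          ((m : ℝ) * K / L + t * m ≤ ((S ∩ M).card : ℝ))}.ncard : ℝ) / (L.choose m)
        ≤ Real.exp (-2 * t ^ 2 * m)) ∧
    (({S : Finset (Fin L) | S.card = m ∧
          (((S ∩ M).card : ℝ) ≤ (m : ℝ) * K / L - t * m)}.ncard : ℝ) / (L.choose m)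
        ≤ Real.exp (-2 * t ^ 2 * m)) :=
  hypergeometric_tail_bound_general L K m M hM t ht
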